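/- Let z, ẑ : Ω → ℝ be square-integrable random variables on a probability space with Var[z] > 0 and Var[ẑ] > 0, let ρ² := Cov[z, ẑ]²/(Var[z]·Var[ẑ]), and set α* := Cov[z, ẑ]/Var[ẑ]. Let m, n be positive integers with (m : ℝ) = (1 − ρ²)·n. Let W₁, …, W_m be i.i.d. real random variables each distributed as z − α*·(ẑ − E[ẑ]), and let Z₁, …, Z_n be i.i.d. real random variables each distributed as z. Then Var[(1/m)·Σ_{j=1}^m W_j] = Var[(1/n)·Σ_{k=1}^n Z_k]. (Human Annotation Saving, Proposition 4.1(3): the control variates estimator needs only a (1 − ρ²) fraction of the human annotations to match the variance of full Human Evaluation.) -/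

import Mathlib

open MeasureTheory ProbabilityTheory
open scoped BigOperators ENNReal

/-- The covariance `Cov[X, Y] = E[(X - E[X]) * (Y - E[Y])]` of two real-valued
random variables. -/
noncomputable def cov {Ω : Type*} [MeasurableSpace Ω] (X Y : Ω → ℝ)
    (μ : Measure Ω) : ℝ :=
  ∫ ω, (X ω - ∫ ω', X ω' ∂μ) * (Y ω - ∫ ω', Y ω' ∂μ) ∂μ

lemma variance_cv {Ω : Type*} [MeasurableSpace Ω] (P : Measure Ω) [IsProbabilityMeasure P]
    (z zhat : Ω → ℝ) (hz : MemLp z 2 P) (hzhat : MemLp zhat 2 P) (α : ℝ) :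
    variance (fun ω => z ω - α * (zhat ω - ∫ ω', zhat ω' ∂P)) P
      = variance z P - 2 * α * cov z zhat P + α ^ 2 * variance zhat P := by
  set μz := ∫ ω', z ω' ∂P with hμz
  set μh := ∫ ω', zhat ω' ∂P with hμh
  set a : Ω → ℝ := fun ω => z ω - μz with ha_def
  set b : Ω → ℝ := fun ω => zhat ω - μh with hb_def
  have ha : MemLp a 2 P := hz.sub (memLp_const _)
  have hb : MemLp b 2 P := hzhat.sub (memLp_const _)
  have hab : Integrable (fun ω => a ω * b ω) P := by
    have h12 : (1 : ℝ≥0∞) / 1 = 1 / 2 + 1 / 2 := by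
      rw [ENNReal.div_add_div_same, one_div_one]
      rw [show (1:ℝ≥0∞)+1 = 2 from one_add_one_eq_two,
        ENNReal.div_self two_ne_zero ENNReal.ofNat_ne_top]
    have : MemLp (a • b) 1 P := hb.smul ha (hpqr := ⟨by simpa only [one_div] using h12.symm⟩)
    exact memLp_one_iff_integrable.mp this
  have ha2 : Integrable (fun ω => a ω ^ 2) P := ha.integrable_sq
  have hb2 : Integrable (fun ω => b ω ^ 2) P := hb.integrable_sq
  set f : Ω → ℝ := fun ω => z ω - α * (zhat ω - μh) with hf_def
  have hf : MemLp f 2 P := hz.sub ((hzhat.sub (memLp_const _)).const_mul α)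
  have h2 : Integrable (fun ω => α * (zhat ω - μh)) P :=
    ((hzhat.integrable one_le_two).sub (integrable_const _)).const_mul α
  have hEf : ∫ ω, f ω ∂P = μz := by
    calc ∫ ω, f ω ∂P = ∫ ω, (z ω - α * (zhat ω - μh)) ∂P := rfl
      _ = (∫ ω, z ω ∂P) - α * ∫ ω, (zhat ω - μh) ∂P := by
          rw [integral_sub (hz.integrable one_le_two) h2, integral_const_mul]
      _ = μz := by
          rw [integral_sub (hzhat.integrable one_le_two) (integrable_const _), integral_const]
          simp [hμz, hμh]
  have key : variance f P = ∫ ω, (a ω ^ 2 - 2 * α * (a ω * b ω) + α ^ 2 * b ω ^ 2) ∂P := by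
    rw [variance_eq_integral hf.aemeasurable, hEf]
    congr 1
    funext ω
    simp only [Pi.pow_apply, Pi.sub_apply, hEf, hf_def, ha_def, hb_def]
    ring
  have h3 : Integrable (fun ω => 2 * α * (a ω * b ω)) P := hab.const_mul _
  have h4 : Integrable (fun ω => a ω ^ 2 - 2 * α * (a ω * b ω)) P := ha2.sub h3
  have h5 : Integrable (fun ω => α ^ 2 * b ω ^ 2) P := hb2.const_mul _
  have hVz : variance z P = ∫ ω, a ω ^ 2 ∂P := by rw [variance_eq_integral hz.aemeasurable]
  have hVh : variance zhat P = ∫ ω, b ω ^ 2 ∂P := by rw [variance_eq_integral hzhat.aemeasurable]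
  have hcov : cov z zhat P = ∫ ω, a ω * b ω ∂P := rfl
  rw [key, integral_add h4 h5, integral_sub ha2 h3, integral_const_mul, integral_const_mul,
    hVz, hVh, hcov]

/-- Human Annotation Saving: if `m = (1 - ρ²)·n`, the average of `m` i.i.d.
copies of the optimal control variates estimate `z - α* (zhat - E[zhat])` has
the same variance as the average of `n` i.i.d. copies of `z`. -/
theorem controlVariates_human_annotation_saving
    {Ω Ω' : Type*} [MeasurableSpace Ω] [MeasurableSpace Ω']
    (P : Measure Ω) [IsProbabilityMeasure P]
    (P' : Measure Ω') [IsProbabilityMeasure P']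
    (z zhat : Ω → ℝ) (hz : MemLp z 2 P) (hzhat : MemLp zhat 2 P)
    (hVz : 0 < variance z P) (hVzhat : 0 < variance zhat P)
    (ρ2 : ℝ) (hρ2 : ρ2 = cov z zhat P ^ 2 / (variance z P * variance zhat P))
    (αstar : ℝ) (hαstar : αstar = cov z zhat P / variance zhat P)
    (m n : ℕ) (hm : 0 < m) (hn : 0 < n) (hmn : (m : ℝ) = (1 - ρ2) * n)
    (W : Fin m → Ω' → ℝ) (Z : Fin n → Ω' → ℝ)
    (hWindep : iIndepFun (m := fun _ => (inferInstance : MeasurableSpace ℝ)) W P')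
    (hWdist : ∀ j : Fin m,
      IdentDistrib (W j) (fun ω => z ω - αstar * (zhat ω - ∫ ω', zhat ω' ∂P)) P' P)
    (hZindep : iIndepFun (m := fun _ => (inferInstance : MeasurableSpace ℝ)) Z P')
    (hZdist : ∀ k : Fin n, IdentDistrib (Z k) z P' P) :
    variance (fun ω => (1 / (m : ℝ)) * ∑ j : Fin m, W j ω) P'
      = variance (fun ω => (1 / (n : ℝ)) * ∑ k : Fin n, Z k ω) P' := by
  set f : Ω → ℝ := fun ω => z ω - αstar * (zhat ω - ∫ ω', zhat ω' ∂P) with hf_def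
  have hf : MemLp f 2 P := hz.sub ((hzhat.sub (memLp_const _)).const_mul αstar)
  -- variance of the control variates estimate
  have hVf : variance f P = variance z P * (1 - ρ2) := by
    rw [hf_def, variance_cv P z zhat hz hzhat αstar, hαstar, hρ2]
    field_simp
    ring
  -- MemLp of the copies
  have hWmem : ∀ j : Fin m, MemLp (W j) 2 P' := fun j => (hWdist j).symm.memLp_snd hf
  have hZmem : ∀ k : Fin n, MemLp (Z k) 2 P' := fun k => (hZdist k).symm.memLp_snd hz
  -- variance of the sums
  have hWsum : variance (fun ω => ∑ j : Fin m, W j ω) P' = m * variance f P := by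
    have hfun : (fun ω => ∑ j : Fin m, W j ω) = ∑ j : Fin m, W j := by
      ext ω; simp
    rw [hfun, IndepFun.variance_sum (fun j _ => hWmem j)
      (fun i _ j _ hij => hWindep.indepFun hij)]
    simp [fun j => (hWdist j).variance_eq]
  have hZsum : variance (fun ω => ∑ k : Fin n, Z k ω) P' = n * variance z P := by
    have hfun : (fun ω => ∑ k : Fin n, Z k ω) = ∑ k : Fin n, Z k := by
      ext ω; simp
    rw [hfun, IndepFun.variance_sum (fun k _ => hZmem k)
      (fun i _ j _ hij => hZindep.indepFun hij)]
    simp [fun k => (hZdist k).variance_eq]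
  rw [variance_const_mul, variance_const_mul, hWsum, hZsum, hVf]
  -- arithmetic
  have hn' : (n : ℝ) ≠ 0 := Nat.cast_ne_zero.mpr hn.ne'
  have hm' : (m : ℝ) ≠ 0 := Nat.cast_ne_zero.mpr hm.ne'
  have ht : (1 - ρ2) ≠ 0 := by
    intro h
    rw [h, zero_mul] at hmn
    exact hm' hmn
  rw [hmn]
  field_simp
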